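/- arXiv:1708.05849 — 9 statements merged into one kernel-verified Lean document; each statement's English description precedes it below -/
import Mathlib

section
/- For any n, the set {0,1}^n \ {𝟎} (all vectors except the all-zeros vector) is semi-stable. This corresponds to the disjunction fragment SL[DG]. -/
def vinter {n : ℕ} (f g : Fin n → Bool) : Fin n → Bool := fun i => f i && g i
def vunion {n : ℕ} (f g : Fin n → Bool) : Fin n → Bool := fun i => f i || g i
def vcompl {n : ℕ} (f : Fin n → Bool) : Fin n → Bool := fun i => !(f i)

/-- A set `F ⊆ {0,1}^n` is semi-stable. -/
def SemiStable {n : ℕ} (F : Set (Fin n → Bool)) : Prop :=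
  ∀ f ∈ F, ∀ g ∈ F, ∀ s : Fin n → Bool,
    vunion (vinter f s) (vinter g (vcompl s)) ∈ F ∨
    vunion (vinter g s) (vinter f (vcompl s)) ∈ F

theorem stmt_3 (n : ℕ) :
    SemiStable ({f : Fin n → Bool | f ≠ fun _ => false}) := by
  intro f hf g hg s
  obtain ⟨i, hi⟩ : ∃ i, f i = true := by
    by_contra h
    push_neg at h
    exact hf (funext fun i => by simpa using h i)
  by_cases hs : s i = true
  · left
    intro h
    have := congrFun h i
    simp [vunion, vinter, vcompl, hi, hs] at this
  · right
    intro h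
    have := congrFun h i
    simp [vunion, vinter, vcompl, hi, Bool.of_not_eq_true hs] at this
end

section
/- A set F ⊆ {0,1}^n is semi-stable if and only if its complement {0,1}^n \ F is semi-stable. -/
lemma recover1 {n : ℕ} (f g s : Fin n → Bool) :
    vunion (vinter (vunion (vinter f s) (vinter g (vcompl s))) s)
      (vinter (vunion (vinter g s) (vinter f (vcompl s))) (vcompl s)) = f := by
  funext i
  simp only [vunion, vinter, vcompl]
  cases s i <;> cases f i <;> simp

lemma recover2 {n : ℕ} (f g s : Fin n → Bool) :
    vunion (vinter (vunion (vinter g s) (vinter f (vcompl s))) s)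
      (vinter (vunion (vinter f s) (vinter g (vcompl s))) (vcompl s)) = g := by
  funext i
  simp only [vunion, vinter, vcompl]
  cases s i <;> cases g i <;> simp

lemma semistable_compl {n : ℕ} (F : Set (Fin n → Bool)) (h : SemiStable F) :
    SemiStable Fᶜ := by
  intro f hf g hg s
  by_contra hc
  push_neg at hc
  obtain ⟨h1, h2⟩ := hc
  simp only [Set.notMem_compl_iff] at h1 h2
  rcases h _ h1 _ h2 s with hh | hh
  · rw [recover1 f g s] at hh; exact hf hh
  · rw [recover2 f g s] at hh; exact hg hh

theorem stmt_4 (n : ℕ) (F : Set (Fin n → Bool)) :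
    SemiStable F ↔ SemiStable Fᶜ := by
  constructor
  · exact semistable_compl F
  · intro h
    have := semistable_compl Fᶜ h
    rwa [compl_compl] at this
end

section
/- If F ⊆ {0,1}^n is semi-stable, then for any s ∈ {0,1}^n and any nonempty finite subset H ⊆ F, there exists f ∈ H such that for all g ∈ H, (f ⊓ s) ⊔ (g ⊓ s̄) ∈ F. -/
theorem stmt_5 (n : ℕ) (F : Set (Fin n → Bool)) (hF : SemiStable F)
    (s : Fin n → Bool) (H : Set (Fin n → Bool)) (hHF : H ⊆ F) (hne : H.Nonempty) :
    ∃ f ∈ H, ∀ g ∈ H, vunion (vinter f s) (vinter g (vcompl s)) ∈ F := by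
  classical
  have refl : ∀ f : Fin n → Bool, vunion (vinter f s) (vinter f (vcompl s)) = f := by
    intro f; funext i; simp only [vunion, vinter, vcompl]; cases s i <;> simp
  have key : ∀ f g, vunion (vinter f s) (vinter g (vcompl s)) ∈ F →
      ∀ h ∈ F, vunion (vinter f s) (vinter h (vcompl s)) ∈ F ∨
               vunion (vinter h s) (vinter g (vcompl s)) ∈ F := by
    intro f g hm h hh
    have := hF _ hm h hh s
    have e1 : vunion (vinter (vunion (vinter f s) (vinter g (vcompl s))) s)
        (vinter h (vcompl s)) = vunion (vinter f s) (vinter h (vcompl s)) := by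
      funext i; simp only [vunion, vinter, vcompl]; cases s i <;> simp
    have e2 : vunion (vinter h s)
        (vinter (vunion (vinter f s) (vinter g (vcompl s))) (vcompl s)) =
        vunion (vinter h s) (vinter g (vcompl s)) := by
      funext i; simp only [vunion, vinter, vcompl]; cases s i <;> simp
    rw [e1, e2] at this
    exact this
  have main : ∀ (T : Finset (Fin n → Bool)), ↑T ⊆ F → T.Nonempty →
      ∃ f ∈ T, ∀ g ∈ T, vunion (vinter f s) (vinter g (vcompl s)) ∈ F := by
    intro T
    induction T using Finset.induction_on with
    | empty => intro _ h; exact absurd h (by simp)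
    | @insert x T hx ih =>
      intro hsub _
      have hxF : x ∈ F := hsub (Finset.mem_insert_self x T)
      have hTF : ↑T ⊆ F := fun y hy => hsub (by simpa using Finset.mem_insert_of_mem hy)
      rcases T.eq_empty_or_nonempty with h0 | hTne
      · refine ⟨x, Finset.mem_insert_self x T, ?_⟩
        intro g hg
        subst h0
        simp only [Finset.insert_empty, Finset.mem_singleton] at hg
        subst hg
        rw [refl]; exact hxF
      · obtain ⟨f, hfT, hfdom⟩ := ih hTF hTne
        by_cases hfx : vunion (vinter f s) (vinter x (vcompl s)) ∈ F
        · refine ⟨f, Finset.mem_insert_of_mem hfT, ?_⟩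
          intro g hg
          rcases Finset.mem_insert.1 hg with rfl | hg
          · exact hfx
          · exact hfdom g hg
        · refine ⟨x, Finset.mem_insert_self x T, ?_⟩
          intro g hg
          rcases Finset.mem_insert.1 hg with rfl | hg
          · rw [refl]; exact hxF
          · rcases key f g (hfdom g hg) x hxF with h1 | h2
            · exact absurd h1 hfx
            · exact h2
  have hfin : H.Finite := Set.toFinite H
  obtain ⟨f, hfT, hfdom⟩ := main hfin.toFinset (by simpa using hHF)
      (hfin.toFinset_nonempty.mpr hne)
  exact ⟨f, by simpa using hfT, fun g hg => hfdom g (by simpa using hg)⟩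
end

section
/- For any semi-stable set F ⊆ {0,1}^n, there exists b ∈ {0,1}^n such that flip_b(F) is upward-closed, i.e., for any f ∈ flip_b(F) and any s ∈ {0,1}^n, f ⊔ s ∈ flip_b(F). -/
def flipb {n : ℕ} (b f : Fin n → Bool) : Fin n → Bool :=
  vunion (vinter f b) (vinter (vcompl f) (vcompl b))

lemma key_coord {n : ℕ} (F : Set (Fin n → Bool)) (hF : SemiStable F) (i : Fin n) :
    (∀ f ∈ F, Function.update f i true ∈ F) ∨ (∀ f ∈ F, Function.update f i false ∈ F) := by
  by_contra h
  push_neg at h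
  obtain ⟨⟨f, hf, hf'⟩, ⟨g, hg, hg'⟩⟩ := h
  have hfi : f i = false := by
    cases hfi : f i
    · rfl
    · exfalso; apply hf'
      have : Function.update f i true = f := by
        funext j; by_cases hj : j = i
        · subst hj; simp [Function.update, hfi]
        · simp [Function.update, hj]
      rw [this]; exact hf
  have hgi : g i = true := by
    cases hgi : g i
    · exfalso; apply hg'
      have : Function.update g i false = g := by
        funext j; by_cases hj : j = i
        · subst hj; simp [Function.update, hgi]
        · simp [Function.update, hj]
      rw [this]; exact hg
    · rfl
  have := hF f hf g hg (fun j => decide (j = i))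
  rcases this with h1 | h1
  · apply hg'
    have : vunion (vinter f (fun j => decide (j = i))) (vinter g (vcompl fun j => decide (j = i)))
        = Function.update g i false := by
      funext j; by_cases hj : j = i
      · subst hj; simp [vunion, vinter, vcompl, Function.update, hfi]
      · simp [vunion, vinter, vcompl, Function.update, hj]
    rwa [this] at h1
  · apply hf'
    have : vunion (vinter g (fun j => decide (j = i))) (vinter f (vcompl fun j => decide (j = i)))
        = Function.update f i true := by
      funext j; by_cases hj : j = i
      · subst hj; simp [vunion, vinter, vcompl, Function.update, hgi]
      · simp [vunion, vinter, vcompl, Function.update, hj]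
    rwa [this] at h1

theorem stmt_9 (n : ℕ) (F : Set (Fin n → Bool)) (hF : SemiStable F) :
    ∃ b : Fin n → Bool, ∀ f ∈ flipb b '' F, ∀ s : Fin n → Bool,
      vunion f s ∈ flipb b '' F := by
  classical
  set b : Fin n → Bool := fun i =>
    if (∀ f ∈ F, Function.update f i true ∈ F) then true else false with hb
  have hupd : ∀ i, ∀ f ∈ F, Function.update f i (b i) ∈ F := by
    intro i f hf
    by_cases hi : (∀ f ∈ F, Function.update f i true ∈ F)
    · have : b i = true := by simp only [hb]; rw [if_pos hi]
      rw [this]; exact hi f hf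
    · have hbi : b i = false := by simp only [hb]; rw [if_neg hi]
      rw [hbi]
      rcases key_coord F hF i with h | h
      · exact absurd h hi
      · exact h f hf
  -- closure under replacing any finite set of coordinates by b
  have hsel : ∀ (S : Finset (Fin n)), ∀ f ∈ F, (fun i => if i ∈ S then b i else f i) ∈ F := by
    intro S
    induction S using Finset.induction with
    | empty => intro f hf; simpa using hf
    | @insert a S ha ih =>
        intro f hf
        have h1 := ih f hf
        have h2 := hupd a _ h1
        have : Function.update (fun i => if i ∈ S then b i else f i) a (b a)
            = fun i => if i ∈ insert a S then b i else f i := by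
          funext i; by_cases hi : i = a
          · subst hi; simp [Function.update]
          · simp [Function.update, hi, Finset.mem_insert]
        rwa [this] at h2
  refine ⟨b, ?_⟩
  rintro _ ⟨f, hf, rfl⟩ s
  set S : Finset (Fin n) := Finset.univ.filter (fun i => s i = true) with hS
  refine ⟨fun i => if i ∈ S then b i else f i, hsel S f hf, ?_⟩
  funext i
  have hmem : (i ∈ S) = (s i = true) := by simp [hS]
  by_cases hsi : s i = true
  · have : i ∈ S := by rw [hmem]; exact hsi
    simp only [flipb, vunion, vinter, vcompl, this, if_pos this, hsi]
    cases b i <;> cases f i <;> rfl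
  · have hsi' : s i = false := by cases h : s i; rfl; exact absurd h hsi
    have hni : i ∉ S := by simp [hS, hsi']
    simp only [flipb, vunion, vinter, vcompl, if_neg hni, hsi']
    cases b i <;> cases f i <;> rfl
end

section
/- Let F ⊆ {0,1}^n be semi-stable and fix s ∈ {0,1}^n. For any h₁, h₂ ∈ {0,1}^n, either 𝔽(h₁, s) ⊆ 𝔽(h₂, s) or 𝔽(h₂, s) ⊆ 𝔽(h₁, s), where 𝔽(h, s) = {h' ∈ {0,1}^n | (h ⊓ s) ⊔ (h' ⊓ s̄) ∈ F}. In other words, the family (𝔽(h, s))_{h} is totally ordered by inclusion. -/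
def FF {n : ℕ} (F : Set (Fin n → Bool)) (h s : Fin n → Bool) : Set (Fin n → Bool) :=
  {h' | vunion (vinter h s) (vinter h' (vcompl s)) ∈ F}

theorem stmt_11 (n : ℕ) (F : Set (Fin n → Bool)) (hF : SemiStable F)
    (s h₁ h₂ : Fin n → Bool) :
    FF F h₁ s ⊆ FF F h₂ s ∨ FF F h₂ s ⊆ FF F h₁ s := by
  by_contra hc
  push_neg at hc
  obtain ⟨h1, h2⟩ := hc
  rw [Set.not_subset] at h1 h2
  obtain ⟨a, ha1, ha2⟩ := h1
  obtain ⟨b, hb2, hb1⟩ := h2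
  have hf : vunion (vinter h₁ s) (vinter a (vcompl s)) ∈ F := ha1
  have hg : vunion (vinter h₂ s) (vinter b (vcompl s)) ∈ F := hb2
  have key := hF _ hf _ hg s
  have e1 : vunion (vinter (vunion (vinter h₁ s) (vinter a (vcompl s))) s)
      (vinter (vunion (vinter h₂ s) (vinter b (vcompl s))) (vcompl s)) =
      vunion (vinter h₁ s) (vinter b (vcompl s)) := by
    funext i
    simp only [vunion, vinter, vcompl]
    cases s i <;> simp
  have e2 : vunion (vinter (vunion (vinter h₂ s) (vinter b (vcompl s))) s)
      (vinter (vunion (vinter h₁ s) (vinter a (vcompl s))) (vcompl s)) =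
      vunion (vinter h₂ s) (vinter a (vcompl s)) := by
    funext i
    simp only [vunion, vinter, vcompl]
    cases s i <;> simp
  rw [e1, e2] at key
  rcases key with k | k
  · exact hb1 k
  · exact ha2 k
end

section
/- Let F ⊆ {0,1}^n be semi-stable and s ∈ {0,1}^n. Define h₁ ⪯_s h₂ iff 𝔽(h₁, s) ⊆ 𝔽(h₂, s), where 𝔽(h, s) = {h' | (h ⊓ s) ⊔ (h' ⊓ s̄) ∈ F}. Then ⪯_s is a total preorder (reflexive, transitive, and total) on {0,1}^n. -/
def pre {n : ℕ} (F : Set (Fin n → Bool)) (s h₁ h₂ : Fin n → Bool) : Prop :=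
  FF F h₁ s ⊆ FF F h₂ s

theorem stmt_12 (n : ℕ) (F : Set (Fin n → Bool)) (hF : SemiStable F) (s : Fin n → Bool) :
    (∀ h, pre F s h h) ∧
    (∀ h₁ h₂ h₃, pre F s h₁ h₂ → pre F s h₂ h₃ → pre F s h₁ h₃) ∧
    (∀ h₁ h₂, pre F s h₁ h₂ ∨ pre F s h₂ h₁) := by
  refine ⟨fun h => subset_rfl, fun _ _ _ hab hbc => hab.trans hbc, fun h₁ h₂ => ?_⟩
  by_cases hle : pre F s h₁ h₂
  · exact Or.inl hle
  · right
    simp only [pre, Set.subset_def, not_forall] at hle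
    obtain ⟨a, ha, hna⟩ := hle
    intro b hb
    have key := hF _ ha _ hb s
    have e1 : vunion (vinter (vunion (vinter h₁ s) (vinter a (vcompl s))) s)
        (vinter (vunion (vinter h₂ s) (vinter b (vcompl s))) (vcompl s)) =
        vunion (vinter h₁ s) (vinter b (vcompl s)) := by
      funext i
      simp only [vunion, vinter, vcompl]
      cases s i <;> simp
    have e2 : vunion (vinter (vunion (vinter h₂ s) (vinter b (vcompl s))) s)
        (vinter (vunion (vinter h₁ s) (vinter a (vcompl s))) (vcompl s)) =
        vunion (vinter h₂ s) (vinter a (vcompl s)) := by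
      funext i
      simp only [vunion, vinter, vcompl]
      cases s i <;> simp
    rcases key with k | k
    · rw [e1] at k; exact k
    · rw [e2] at k; exact absurd k hna
end

section
/- Let F ⊆ {0,1}^n be semi-stable, and let s₁, s₂ ∈ {0,1}^n with s₁ ⊓ s₂ = 𝟎. If f ⪯_{s₁} g and f ⪯_{s₂} g, then f ⪯_{s₁ ⊔ s₂} g, where f ⪯_s g means {h' | (f ⊓ s) ⊔ (h' ⊓ s̄) ∈ F} ⊆ {h' | (g ⊓ s) ⊔ (h' ⊓ s̄) ∈ F}. -/
theorem stmt_14 (n : ℕ) (F : Set (Fin n → Bool)) (hF : SemiStable F)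
    (s₁ s₂ f g : Fin n → Bool) (hdisj : vinter s₁ s₂ = fun _ => false)
    (h1 : pre F s₁ f g) (h2 : pre F s₂ f g) :
    pre F (vunion s₁ s₂) f g := by
  intro h' hx
  simp only [FF, Set.mem_setOf_eq] at hx ⊢
  -- step 1: use h1 with h'' = (f ⊓ s₂) ⊔ (h' ⊓ (s₁ ⊔ s₂)ᶜ)
  set h'' : Fin n → Bool := vunion (vinter f s₂) (vinter h' (vcompl (vunion s₁ s₂))) with hh''
  have e1 : vunion (vinter f s₁) (vinter h'' (vcompl s₁))
      = vunion (vinter f (vunion s₁ s₂)) (vinter h' (vcompl (vunion s₁ s₂))) := by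
    funext i
    have hd := congrFun hdisj i
    simp only [vinter, vunion, vcompl, hh''] at hd ⊢
    revert hd
    cases f i <;> cases h' i <;> cases s₁ i <;> cases s₂ i <;> decide
  have m1 : h'' ∈ FF F f s₁ := by
    simp only [FF, Set.mem_setOf_eq, e1]; exact hx
  have m1' := h1 m1
  simp only [FF, Set.mem_setOf_eq] at m1'
  -- step 2: use h2 with h''' = (g ⊓ s₁) ⊔ (h' ⊓ (s₁ ⊔ s₂)ᶜ)
  set h''' : Fin n → Bool := vunion (vinter g s₁) (vinter h' (vcompl (vunion s₁ s₂))) with hh'''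
  have e2 : vunion (vinter f s₂) (vinter h''' (vcompl s₂))
      = vunion (vinter g s₁) (vinter h'' (vcompl s₁)) := by
    funext i
    have hd := congrFun hdisj i
    simp only [vinter, vunion, vcompl, hh'', hh'''] at hd ⊢
    revert hd
    cases f i <;> cases g i <;> cases h' i <;> cases s₁ i <;> cases s₂ i <;> decide
  have m2 : h''' ∈ FF F f s₂ := by
    simp only [FF, Set.mem_setOf_eq, e2]; exact m1'
  have m2' := h2 m2
  simp only [FF, Set.mem_setOf_eq] at m2'
  have e3 : vunion (vinter g s₂) (vinter h''' (vcompl s₂))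
      = vunion (vinter g (vunion s₁ s₂)) (vinter h' (vcompl (vunion s₁ s₂))) := by
    funext i
    have hd := congrFun hdisj i
    simp only [vinter, vunion, vcompl, hh'''] at hd ⊢
    revert hd
    cases g i <;> cases h' i <;> cases s₁ i <;> cases s₂ i <;> decide
  rw [← e3]; exact m2'
end

section
/- If F' ⊆ {0,1}^{n-1} is semi-stable, then F = {f ∈ {0,1}^n | f(n) = 1} ∪ {g ∈ {0,1}^n | g|_{[1,n−1]} ∈ F'} is semi-stable. (Closure of semi-stability under disjunction with a new goal.) -/
theorem stmt_17 (n : ℕ) (F' : Set (Fin n → Bool)) (hF' : SemiStable F') :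
    SemiStable ({f : Fin (n + 1) → Bool | f (Fin.last n) = true} ∪
      {g : Fin (n + 1) → Bool | (fun i : Fin n => g i.castSucc) ∈ F'}) := by
  intro f hf g hg s
  by_cases hf' : (fun i : Fin n => f i.castSucc) ∈ F'
  · by_cases hg' : (fun i : Fin n => g i.castSucc) ∈ F'
    · rcases hF' _ hf' _ hg' (fun i => s i.castSucc) with h | h
      · exact Or.inl (Or.inr h)
      · exact Or.inr (Or.inr h)
    · have hgl : g (Fin.last n) = true := hg.resolve_right hg'
      cases hs : s (Fin.last n)
      · left; left; simp [vunion, vinter, vcompl, hs, hgl]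
      · right; left; simp [vunion, vinter, vcompl, hs, hgl]
  · have hfl : f (Fin.last n) = true := hf.resolve_right hf'
    cases hs : s (Fin.last n)
    · right; left; simp [vunion, vinter, vcompl, hs, hfl]
    · left; left; simp [vunion, vinter, vcompl, hs, hfl]
end

section
/- The set H³ = {(1,1,1), (1,1,0), (1,0,1), (0,1,1)} ⊆ {0,1}^3 is semi-stable, but there is no representation of H³ in the SL[AG] form: for every boolean formula ξ(x₁,x₂,x₃) of the shape ξ'(x₁,x₂) ∧ ℓ₃ or ξ'(x₁,x₂) ∨ ℓ₃ (where ℓ₃ ∈ {x₃, ¬x₃} and ξ' is any boolean function of x₁, x₂), the set of satisfying assignments of ξ differs from H³. -/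
lemma vec3_eta (v : Fin 3 → Bool) : v = ![v 0, v 1, v 2] := by
  funext i; fin_cases i <;> rfl

lemma memH (v : Fin 3 → Bool) :
    v ∈ ({![true, true, true], ![true, true, false], ![true, false, true],
      ![false, true, true]} : Set (Fin 3 → Bool)) ↔
    ((v 0 && v 1) || (v 0 && v 2) || (v 1 && v 2)) = true := by
  simp only [Set.mem_insert_iff, Set.mem_singleton_iff]
  constructor
  · rintro (h | h | h | h) <;> subst h <;> rfl
  · intro h
    have hv := vec3_eta v
    revert h
    generalize v 0 = a at hv ⊢; generalize v 1 = b at hv ⊢; generalize v 2 = c at hv ⊢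
    subst hv
    revert a b c
    decide

theorem stmt_19 :
    let H : Set (Fin 3 → Bool) :=
      {![true, true, true], ![true, true, false], ![true, false, true], ![false, true, true]}
    SemiStable H ∧
    (∀ ξ' : Bool → Bool → Bool, ∀ lit : Bool → Bool, (lit = id ∨ lit = not) →
      ({f : Fin 3 → Bool | (ξ' (f 0) (f 1) && lit (f 2)) = true} ≠ H ∧
       {f : Fin 3 → Bool | (ξ' (f 0) (f 1) || lit (f 2)) = true} ≠ H)) := by
  intro H
  constructor
  · intro f hf g hg s
    rw [show (f ∈ H) = _ from rfl, memH] at hf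
    rw [show (g ∈ H) = _ from rfl, memH] at hg
    rw [show (H : Set (Fin 3 → Bool)) = _ from rfl, memH, memH]
    simp only [vunion, vinter, vcompl]
    revert hf hg
    generalize f 0 = a; generalize f 1 = b; generalize f 2 = c
    generalize g 0 = d; generalize g 1 = e; generalize g 2 = k
    generalize s 0 = p; generalize s 1 = q; generalize s 2 = r
    revert a b c d e k p q r; decide
  · intro ξ' lit hlit
    constructor
    · intro h
      rw [Set.ext_iff] at h
      rcases hlit with hl | hl <;> subst hl
      · have := (h ![true, true, false]).mpr
        simp at this
        exact this ((memH _).mpr rfl)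
      · have := (h ![true, true, true]).mpr
        simp at this
        exact this ((memH _).mpr rfl)
    · intro h
      rw [Set.ext_iff] at h
      rcases hlit with hl | hl <;> subst hl
      · have := (h ![false, false, true]).mp
        simp at this
        simpa using (memH _).mp this
      · have := (h ![false, false, false]).mp
        simp at this
        simpa using (memH _).mp this
end
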